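/- Let M ≥ 3 be an odd integer, n ∈ {1,2}, and Θ̄ = (θ̄_1,…,θ̄_{M-1}) with θ̄_k := k n π / M (and θ̄_j := j n π / M for any integer j). Then for all l, m ∈ {1,…,M-1}: sin²(θ̄_1) · [∇Ḡ(Θ̄)]_{lm} = (-1)^m cos(2θ̄_m) sin(2θ̄_1) if l = m; sin²(θ̄_1) · [∇Ḡ(Θ̄)]_{lm} = (-1)^m sin(2θ̄_1)(cos(2θ̄_m) - (-1)^l cos(2θ̄_{l-m})) if l < m; and sin²(θ̄_1) · [∇Ḡ(Θ̄)]_{lm} = (-1)^m sin(2θ̄_1)(cos(2θ̄_m) + (-1)^l cos(2θ̄_{l-m})) if m < l. -/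

import Mathlib

open Complex Real Finset

noncomputable section

/-- The angles `θ_0 = 0`, `θ_j = Θ_j` for `1 ≤ j ≤ M-1`, read off a vector `Θ ∈ ℝ^{M-1}`. -/
def thN (M : ℕ) (Θ : Fin (M - 1) → ℝ) (j : ℕ) : ℝ :=
  if h : 1 ≤ j ∧ j ≤ M - 1 then Θ ⟨j - 1, by omega⟩ else 0

/-- `𝒦̄(Θ)`. -/
def KbarV (M : ℕ) (Θ : Fin (M - 1) → ℝ) : ℂ :=
  (1 + (-1 : ℂ) ^ M) / 2 +
    (-1 : ℂ) ^ M * ∑ k ∈ Finset.Icc 1 (M - 1),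
      (-1 : ℂ) ^ k * Complex.exp (-2 * Complex.I * (thN M Θ k : ℂ))

/-- `𝓗̄_l(Θ)`. -/
def HbarV (M : ℕ) (Θ : Fin (M - 1) → ℝ) (l : ℕ) : ℂ :=
  (1 - (-1 : ℂ) ^ M) / 2 +
    (∑ k ∈ Finset.range l,
      (-1 : ℂ) ^ (l + k) * Complex.exp (2 * Complex.I * ((thN M Θ l - thN M Θ k : ℝ) : ℂ))) +
    (-1 : ℂ) ^ M * ∑ k ∈ Finset.Icc l (M - 1),
      (-1 : ℂ) ^ (l + k) * Complex.exp (2 * Complex.I * ((thN M Θ l - thN M Θ k : ℝ) : ℂ))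

/-- `Ḡ_l(Θ) = Re(𝓗̄_l(Θ)/𝒦̄(Θ))`. -/
def GbarV (M : ℕ) (l : ℕ) (Θ : Fin (M - 1) → ℝ) : ℝ := (HbarV M Θ l / KbarV M Θ).re

/-- The partial derivative `∂Ḡ_l/∂θ_m` at `Θ` (here `m : Fin (M-1)` indexes `θ_{m+1}`). -/
def partialG (M : ℕ) (l : ℕ) (Θ : Fin (M - 1) → ℝ) (m : Fin (M - 1)) : ℝ :=
  deriv (fun t : ℝ => GbarV M l (Function.update Θ m t)) (Θ m)

/-- The vector `Θ̄ = (θ̄_1, …, θ̄_{M-1})`, `θ̄_k = k n π / M`. -/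
def ThbarV (M n : ℕ) : Fin (M - 1) → ℝ := fun k => ((k : ℕ) + 1) * n * π / M

/-- The angles `θ̄_j = j n π / M`, for an arbitrary integer `j`. -/
def thbarZ (M n : ℕ) (j : ℤ) : ℝ := (j : ℝ) * n * π / M

/-!
Each `θ_m` enters `𝒦̄` and `𝓗̄_l` only through single exponentials `e^{∓2iθ_m}` (for `m = l`,
through an overall factor `e^{2iθ_l}` of `𝓗̄_l`, M being odd), so the partial derivatives are
explicit. At `Θ̄` put `w = -e^{-2iθ̄₁}`; then `w ^ M = -1`, and after reindexing both `𝒦̄(Θ̄)` and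
every `𝓗̄_l(Θ̄)` become `1 - ∑_{k<M} w^k = (w + 1)/(w - 1) = -i tan θ̄₁`. Since `𝓗̄_l = 𝒦̄` there,
the quotient rule reduces `∂_m Ḡ_l` to `Re((∂_m 𝓗̄_l - ∂_m 𝒦̄)/𝒦̄) = -cot θ̄₁ · Im(∂_m 𝓗̄_l - ∂_m 𝒦̄)`.
-/

open Function

theorem HasDerivAt.re_div_of_eq {f g : ℝ → ℂ} {f' g' : ℂ} {t : ℝ} (hf : HasDerivAt f f' t)
    (hg : HasDerivAt g g' t) (hfg : f t = g t) (hg0 : g t ≠ 0) :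
    HasDerivAt (fun s => (f s / g s).re) (((f' - g') / g t).re) t := by
  refine (Complex.reCLM.hasFDerivAt.comp_hasDerivAt t (hf.div hg hg0)).congr_deriv ?_
  rw [hfg]
  simp only [Complex.reCLM_apply]
  congr 1
  field_simp

theorem hasDerivAt_update_apply (x : ℕ → ℝ) (j k : ℕ) :
    HasDerivAt (fun t => update x j t k) (if k = j then 1 else 0) (x j) := by
  simpa [Pi.single_apply] using hasDerivAt_pi.1 (hasDerivAt_update x j (x j)) k

theorem hasDerivAt_sum_exp_update (s : Finset ℕ) (c : ℕ → ℂ) (a : ℂ) (x : ℕ → ℝ) (j : ℕ) :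
    HasDerivAt (fun t => ∑ k ∈ s, c k * exp (a * (update x j t k : ℂ)))
      (if j ∈ s then c j * a * exp (a * x j) else 0) (x j) := by
  have hterm (k : ℕ) : HasDerivAt (fun t => c k * exp (a * (update x j t k : ℂ)))
      (if k = j then c k * a * exp (a * x k) else 0) (x j) :=
    ((((hasDerivAt_update_apply x j k).ofReal_comp.const_mul a).cexp).const_mul (c k)).congr_deriv
      (by split_ifs <;> simp only [update_eq_self, Complex.ofReal_one, Complex.ofReal_zero] <;> ring)
  simpa only [Finset.sum_ite_eq'] using HasDerivAt.fun_sum (u := s) (fun k _ => hterm k)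

theorem hasDerivAt_sum_exp_sub_update (s : Finset ℕ) (c : ℕ → ℂ) (a : ℂ) (x : ℕ → ℝ)
    (j l : ℕ) :
    HasDerivAt (fun t => ∑ k ∈ s, c k * exp (a * ((update x j t l - update x j t k : ℝ) : ℂ)))
      (a * ((if l = j then ∑ k ∈ s, c k * exp (a * ((x l - x k : ℝ) : ℂ)) else 0) -
        if j ∈ s then c j * exp (a * ((x l - x j : ℝ) : ℂ)) else 0)) (x j) := by
  have hterm (k : ℕ) : HasDerivAt
      (fun t => c k * exp (a * ((update x j t l - update x j t k : ℝ) : ℂ)))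
      (a * ((if l = j then c k * exp (a * ((x l - x k : ℝ) : ℂ)) else 0) -
        if k = j then c k * exp (a * ((x l - x k : ℝ) : ℂ)) else 0)) (x j) :=
    ((((((hasDerivAt_update_apply x j l).sub (hasDerivAt_update_apply x j k)).ofReal_comp).const_mul
      a).cexp).const_mul (c k)).congr_deriv
      (by split_ifs <;> simp only [Pi.sub_apply, update_eq_self, Complex.ofReal_sub, Complex.ofReal_one,
        Complex.ofReal_zero] <;> ring)
  have hsum := HasDerivAt.fun_sum (u := s) (fun k _ => hterm k)
  rwa [← Finset.mul_sum, Finset.sum_sub_distrib, Finset.sum_ite_eq', Finset.sum_ite_irrel,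
    Finset.sum_const_zero] at hsum

theorem sq_mul_re_div_of_mul_eq_neg_I_mul {K z : ℂ} {s c : ℝ} (hK : K * c = -I * s)
    (hs : s ≠ 0) : s ^ 2 * (z / K).re = -(s * c) * z.im := by
  have hs' : (s : ℂ) ≠ 0 := ofReal_ne_zero.2 hs
  have hK0 : K ≠ 0 := by
    rintro rfl
    simp_all
  have hdiv : z / K = ((c / s : ℝ) : ℂ) * (I * z) := by
    rw [div_eq_iff hK0]
    push_cast
    field_simp
    linear_combination (-z * I) * hK + z * s * I_mul_I
  rw [hdiv, re_ofReal_mul, I_mul_re]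
  field_simp

theorem re_exp_two_mul_I (x : ℝ) : (exp (2 * I * x)).re = Real.cos (2 * x) := by
  rw [show 2 * I * x = ((2 * x : ℝ) : ℂ) * I by push_cast; ring, exp_ofReal_mul_I_re]

theorem re_exp_neg_two_mul_I (x : ℝ) : (exp (-2 * I * x)).re = Real.cos (2 * x) := by
  rw [show -2 * I * x = ((-(2 * x) : ℝ) : ℂ) * I by push_cast; ring, exp_ofReal_mul_I_re,
    Real.cos_neg]

theorem neg_one_pow_mul_exp_sub (x y : ℝ) (l k : ℕ) :
    (-1 : ℂ) ^ (l + k) * exp (2 * I * ((x - y : ℝ) : ℂ)) =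
      (-1) ^ k * exp (-2 * I * y) / ((-1) ^ l * exp (-2 * I * x)) := by
  have hsign : (-1 : ℂ) ^ (l + k) * (-1) ^ l = (-1) ^ k := by
    rw [pow_add, mul_right_comm, ← pow_add, ← two_mul, pow_mul, neg_one_sq, one_pow, one_mul]
  rw [eq_div_iff (mul_ne_zero (pow_ne_zero _ (by norm_num)) (Complex.exp_ne_zero _)),
    mul_mul_mul_comm, ← Complex.exp_add, hsign]
  congr 2
  push_cast
  ring

theorem neg_exp_add_one_mul_cos (θ : ℝ) :
    (-exp (-2 * I * θ) + 1) * Real.cos θ = -I * Real.sin θ * (-exp (-2 * I * θ) - 1) := by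
  have hexp : exp (-2 * I * θ) = exp (-(θ * I)) ^ 2 := by
    rw [← Complex.exp_nat_mul]; push_cast; ring_nf
  have hinv : exp (θ * I) * exp (-(θ * I)) = 1 := by rw [← Complex.exp_add]; simp
  rw [Complex.ofReal_cos, Complex.ofReal_sin, Complex.cos, Complex.sin, hexp]
  simp only [neg_mul]
  linear_combination -exp (-(θ * I)) * hinv +
    (exp (-(θ * I)) - exp (θ * I)) * (-exp (-(θ * I)) ^ 2 - 1) / 2 * I_mul_I

theorem sum_range_sub_sum_Ico_zpow {K : Type*} [Field K] {w : K} {M l : ℕ} (hw : w ^ M = -1)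
    (hl : l ≤ M) :
    ∑ k ∈ Finset.range l, w ^ ((k : ℤ) - l) - ∑ k ∈ Finset.Ico l M, w ^ ((k : ℤ) - l) =
      -∑ k ∈ Finset.range M, w ^ k := by
  obtain rfl | hM := M.eq_zero_or_pos
  · simp [Nat.le_zero.1 hl]
  have hw0 : w ≠ 0 := by
    rintro rfl
    simp [zero_pow hM.ne'] at hw
  -- `w ^ (k - l) = -w ^ (k + M - l)` moves the first sum onto `[M, M + l)`, right after the second.
  have hshift : ∑ k ∈ Finset.range l, w ^ ((k : ℤ) - l) =
      -∑ k ∈ Finset.Ico M (M + l), w ^ ((k : ℤ) - l) := by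
    rw [Finset.sum_Ico_eq_sum_range, Nat.add_sub_cancel_left, ← Finset.sum_neg_distrib]
    refine Finset.sum_congr rfl fun k _ => ?_
    rw [Nat.cast_add, add_sub_assoc, zpow_add₀ hw0, zpow_natCast, hw]
    ring
  rw [hshift, ← neg_add', add_comm, Finset.sum_Ico_consecutive _ hl (by omega),
    Finset.sum_Ico_eq_sum_range, Nat.add_sub_cancel]
  congr 1
  refine Finset.sum_congr rfl fun k _ => ?_
  rw [Nat.cast_add, add_sub_cancel_left, zpow_natCast]

theorem thN_update {M : ℕ} (Θ : Fin (M - 1) → ℝ) (i : Fin (M - 1)) (t : ℝ) :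
    thN M (update Θ i t) = update (thN M Θ) (i + 1) t := by
  funext j
  by_cases hj : j = i + 1
  · subst hj
    simp [thN]
  · rw [update_of_ne hj]
    unfold thN
    split_ifs with hr
    · refine update_of_ne (fun h => hj ?_) _ _
      rw [← h, Fin.val_mk]
      omega
    · rfl

theorem thN_succ {M : ℕ} (Θ : Fin (M - 1) → ℝ) (i : Fin (M - 1)) : thN M Θ (i + 1) = Θ i := by
  simp [thN]

/-- `∂𝒦̄/∂θ_j`. -/
def KbarVDeriv (M : ℕ) (Θ : Fin (M - 1) → ℝ) (j : ℕ) : ℂ :=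
  (-1) ^ M * ((-1) ^ j * (-2 * I) * exp (-2 * I * (thN M Θ j : ℂ)))

/-- `∂𝓗̄_l/∂θ_j`, for `1 ≤ j ≤ M - 1`. -/
def HbarVDeriv (M : ℕ) (Θ : Fin (M - 1) → ℝ) (l j : ℕ) : ℂ :=
  2 * I * ((if l = j then HbarV M Θ l - (1 - (-1) ^ M) / 2 else 0) -
    (if j < l then 1 else (-1) ^ M) * (-1) ^ (l + j) *
      exp (2 * I * ((thN M Θ l - thN M Θ j : ℝ) : ℂ)))

theorem hasDerivAt_KbarV_update {M : ℕ} (Θ : Fin (M - 1) → ℝ) (i : Fin (M - 1)) :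
    HasDerivAt (fun t => KbarV M (update Θ i t)) (KbarVDeriv M Θ (i + 1)) (Θ i) := by
  have h := hasDerivAt_sum_exp_update (Finset.Icc 1 (M - 1)) (fun k => (-1 : ℂ) ^ k) (-2 * I)
    (thN M Θ) (i + 1)
  rw [if_pos (by simp), thN_succ] at h
  simp only [KbarV, thN_update]
  exact ((h.const_mul _).const_add _).congr_deriv (by rw [KbarVDeriv, thN_succ])

theorem hasDerivAt_HbarV_update {M : ℕ} (Θ : Fin (M - 1) → ℝ) (i : Fin (M - 1)) (l : ℕ) :
    HasDerivAt (fun t => HbarV M (update Θ i t) l) (HbarVDeriv M Θ l (i + 1)) (Θ i) := by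
  have h₁ := hasDerivAt_sum_exp_sub_update (Finset.range l) (fun k => (-1 : ℂ) ^ (l + k))
    (2 * I) (thN M Θ) (i + 1) l
  have h₂ := hasDerivAt_sum_exp_sub_update (Finset.Icc l (M - 1)) (fun k => (-1 : ℂ) ^ (l + k))
    (2 * I) (thN M Θ) (i + 1) l
  rw [thN_succ] at h₁ h₂
  simp only [HbarV, thN_update]
  refine ((h₁.const_add _).add (h₂.const_mul _)).congr_deriv ?_
  have hi := i.isLt
  simp only [HbarVDeriv, HbarV, thN_succ, Finset.mem_range, Finset.mem_Icc]
  split_ifs <;> first | omega | ring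

theorem HbarVDeriv_self {M : ℕ} (hModd : Odd M) (Θ : Fin (M - 1) → ℝ) (l : ℕ) :
    HbarVDeriv M Θ l l = 2 * I * HbarV M Θ l := by
  simp [HbarVDeriv, hModd.neg_one_pow, ← two_mul, pow_mul]

theorem partialG_eq_re_div {M l : ℕ} (Θ : Fin (M - 1) → ℝ) (i : Fin (M - 1))
    (hHK : HbarV M Θ l = KbarV M Θ) (hK : KbarV M Θ ≠ 0) :
    partialG M l Θ i = ((HbarVDeriv M Θ l (i + 1) - KbarVDeriv M Θ (i + 1)) / KbarV M Θ).re := by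
  have h := (hasDerivAt_HbarV_update Θ i l).re_div_of_eq (hasDerivAt_KbarV_update Θ i)
    (by simpa only [update_eq_self]) (by simpa only [update_eq_self])
  rw [update_eq_self] at h
  exact h.deriv

theorem thN_ThbarV {M : ℕ} (n : ℕ) {j : ℕ} (hj : j ≤ M - 1) :
    thN M (ThbarV M n) j = thbarZ M n j := by
  unfold thN ThbarV thbarZ
  rcases Nat.eq_zero_or_pos j with rfl | h
  · simp
  · rw [dif_pos ⟨h, hj⟩]
    push_cast [Nat.cast_sub h]
    ring

theorem thbarZ_sub (M n : ℕ) (a b : ℤ) : thbarZ M n a - thbarZ M n b = thbarZ M n (a - b) := by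
  unfold thbarZ
  push_cast
  ring

theorem thbarZ_eq_mul (M n : ℕ) (j : ℤ) : thbarZ M n j = j * thbarZ M n 1 := by
  unfold thbarZ
  push_cast
  ring

theorem cos_thbarZ_one_ne_zero {M : ℕ} (n : ℕ) (hModd : Odd M) : Real.cos (thbarZ M n 1) ≠ 0 := by
  rw [Ne, Real.cos_eq_zero_iff]
  rintro ⟨k, hk⟩
  have hM : (M : ℝ) ≠ 0 := Nat.cast_ne_zero.2 hModd.pos.ne'
  have hreal : ((n * 2 : ℤ) : ℝ) = ((2 * k + 1) * M : ℤ) := by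
    simp only [thbarZ] at hk
    field_simp at hk
    push_cast at hk ⊢
    linarith
  have hint : (n * 2 : ℤ) = (2 * k + 1) * M := by exact_mod_cast hreal
  have hodd : Odd ((2 * k + 1) * (M : ℤ)) := (odd_two_mul_add_one k).mul (by exact_mod_cast hModd)
  exact Int.not_odd_iff_even.2 ⟨n, by ring⟩ (hint ▸ hodd)

theorem sin_thbarZ_one_pos {M n : ℕ} (hn : 0 < n) (hnM : n < M) : 0 < Real.sin (thbarZ M n 1) := by
  have hM : (0 : ℝ) < M := by exact_mod_cast hn.trans hnM
  apply Real.sin_pos_of_pos_of_lt_pi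
  · simp only [thbarZ]; positivity
  · simp only [thbarZ, Int.cast_one, one_mul]
    rw [div_lt_iff₀ hM, mul_comm]
    exact mul_lt_mul_of_pos_left (by exact_mod_cast hnM) Real.pi_pos

theorem neg_one_pow_mul_exp_thN_ThbarV {M : ℕ} (n : ℕ) {j : ℕ} (hj : j ≤ M - 1) :
    (-1) ^ j * exp (-2 * I * (thN M (ThbarV M n) j : ℂ)) =
      (-exp (-2 * I * thbarZ M n 1)) ^ j := by
  rw [neg_pow (Complex.exp _), thN_ThbarV n hj, thbarZ_eq_mul, ← Complex.exp_nat_mul]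
  push_cast
  ring_nf

theorem pow_neg_exp_thbarZ_one {M : ℕ} (n : ℕ) (hModd : Odd M) :
    (-exp (-2 * I * thbarZ M n 1)) ^ M = -1 := by
  have hM : (M : ℂ) ≠ 0 := Nat.cast_ne_zero.2 hModd.pos.ne'
  rw [neg_pow, hModd.neg_one_pow, ← Complex.exp_nat_mul, Complex.exp_eq_one_iff.2 ⟨-n, ?_⟩,
    mul_one]
  simp only [thbarZ]
  push_cast
  field_simp

theorem KbarV_ThbarV {M : ℕ} (n : ℕ) (hModd : Odd M) :
    KbarV M (ThbarV M n) = 1 - ∑ k ∈ Finset.range M, (-exp (-2 * I * thbarZ M n 1)) ^ k := by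
  have hIcc : Finset.Icc 1 (M - 1) = Finset.Ico 1 M := by
    ext
    simp only [Finset.mem_Icc, Finset.mem_Ico]
    omega
  rw [KbarV, hModd.neg_one_pow, Finset.range_eq_Ico, Finset.sum_eq_sum_Ico_succ_bot hModd.pos,
    hIcc, Finset.sum_congr rfl fun k hk => neg_one_pow_mul_exp_thN_ThbarV n
      (Nat.le_sub_one_of_lt (Finset.mem_Ico.1 hk).2)]
  ring

theorem HbarV_ThbarV {M : ℕ} (n : ℕ) (hModd : Odd M) {l : ℕ} (hl : l ≤ M - 1) :
    HbarV M (ThbarV M n) l = 1 - ∑ k ∈ Finset.range M, (-exp (-2 * I * thbarZ M n 1)) ^ k := by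
  set w := -exp (-2 * I * thbarZ M n 1)
  have hterm {k : ℕ} (hk : k ≤ M - 1) : (-1 : ℂ) ^ (l + k) * exp (2 * I *
      ((thN M (ThbarV M n) l - thN M (ThbarV M n) k : ℝ) : ℂ)) = w ^ ((k : ℤ) - l) := by
    rw [neg_one_pow_mul_exp_sub, neg_one_pow_mul_exp_thN_ThbarV n hk,
      neg_one_pow_mul_exp_thN_ThbarV n hl, zpow_sub₀ (by simp [w]), zpow_natCast, zpow_natCast]
  have hIcc : Finset.Icc l (M - 1) = Finset.Ico l M := by
    have := hModd.pos
    ext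
    simp only [Finset.mem_Icc, Finset.mem_Ico]
    omega
  rw [HbarV, hModd.neg_one_pow, hIcc,
    Finset.sum_congr rfl fun k hk => hterm (by rw [Finset.mem_range] at hk; omega),
    Finset.sum_congr rfl fun k hk => hterm (by rw [Finset.mem_Ico] at hk; omega)]
  linear_combination sum_range_sub_sum_Ico_zpow (pow_neg_exp_thbarZ_one n hModd) (by omega : l ≤ M)

theorem HbarV_ThbarV_eq_KbarV_ThbarV {M : ℕ} (n : ℕ) (hModd : Odd M) {l : ℕ} (hl : l ≤ M - 1) :
    HbarV M (ThbarV M n) l = KbarV M (ThbarV M n) :=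
  (HbarV_ThbarV n hModd hl).trans (KbarV_ThbarV n hModd).symm

theorem KbarV_ThbarV_mul_cos {M : ℕ} (n : ℕ) (hModd : Odd M) :
    KbarV M (ThbarV M n) * Real.cos (thbarZ M n 1) = -I * Real.sin (thbarZ M n 1) := by
  have htrig := neg_exp_add_one_mul_cos (thbarZ M n 1)
  set w := -exp (-2 * I * thbarZ M n 1)
  have hc : (Real.cos (thbarZ M n 1) : ℂ) ≠ 0 := ofReal_ne_zero.2 (cos_thbarZ_one_ne_zero n hModd)
  have hgeom : KbarV M (ThbarV M n) * (w - 1) = w + 1 := by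
    rw [KbarV_ThbarV n hModd, sub_mul, geom_sum_mul, pow_neg_exp_thbarZ_one n hModd]
    ring
  have hw : w - 1 ≠ 0 := by
    intro hw
    rw [hw, mul_zero, mul_eq_zero, or_iff_left hc, add_eq_zero_iff_eq_neg] at htrig
    rw [htrig] at hw
    norm_num at hw
  apply mul_right_cancel₀ hw
  rw [mul_right_comm, hgeom, htrig]

theorem re_KbarV_ThbarV {M : ℕ} (n : ℕ) (hModd : Odd M) : (KbarV M (ThbarV M n)).re = 0 := by
  have h := congrArg Complex.re (KbarV_ThbarV_mul_cos n hModd)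
  rw [re_mul_ofReal, neg_mul, neg_re, I_mul_re, ofReal_im, neg_zero, neg_zero] at h
  exact (mul_eq_zero.1 h).resolve_right (cos_thbarZ_one_ne_zero n hModd)

theorem im_KbarVDeriv_ThbarV {M : ℕ} (n : ℕ) (hModd : Odd M) {m : ℕ} (hm : m ≤ M - 1) :
    (KbarVDeriv M (ThbarV M n) m).im = 2 * (-1) ^ m * Real.cos (2 * thbarZ M n m) := by
  have h : KbarVDeriv M (ThbarV M n) m =
      ((2 * (-1) ^ m : ℝ) : ℂ) * (I * exp (-2 * I * thbarZ M n m)) := by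
    rw [KbarVDeriv, thN_ThbarV n hm, hModd.neg_one_pow]
    push_cast
    ring
  rw [h, im_ofReal_mul, I_mul_im, re_exp_neg_two_mul_I]

theorem im_HbarVDeriv_ThbarV_of_ne {M : ℕ} (n : ℕ) (hModd : Odd M) {l m : ℕ} (hl : l ≤ M - 1)
    (hm : m ≤ M - 1) (hlm : l ≠ m) :
    (HbarVDeriv M (ThbarV M n) l m).im =
      -2 * (if m < l then 1 else -1) * (-1) ^ (l + m) * Real.cos (2 * thbarZ M n (l - m)) := by
  have h : HbarVDeriv M (ThbarV M n) l m =
      ((-2 * (if m < l then 1 else -1) * (-1) ^ (l + m) : ℝ) : ℂ) *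
        (I * exp (2 * I * thbarZ M n (l - m))) := by
    rw [HbarVDeriv, if_neg hlm, thN_ThbarV n hl, thN_ThbarV n hm, thbarZ_sub, hModd.neg_one_pow]
    split_ifs <;> push_cast <;> ring
  rw [h, im_ofReal_mul, I_mul_im, re_exp_two_mul_I]

theorem sin_sq_mul_partialG_ThbarV {M n : ℕ} (hModd : Odd M) (hn : 0 < n) (hnM : n < M) {l m : ℕ}
    (hl : l ≤ M - 1) (hm1 : 1 ≤ m) (hm2 : m ≤ M - 1) :
    Real.sin (thbarZ M n 1) ^ 2 * partialG M l (ThbarV M n) ⟨m - 1, by omega⟩ =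
      -(Real.sin (thbarZ M n 1) * Real.cos (thbarZ M n 1)) *
        ((HbarVDeriv M (ThbarV M n) l m).im - (KbarVDeriv M (ThbarV M n) m).im) := by
  have hs := (sin_thbarZ_one_pos hn hnM).ne'
  have hK := KbarV_ThbarV_mul_cos n hModd
  have hK0 : KbarV M (ThbarV M n) ≠ 0 := by
    rintro h
    rw [h, zero_mul, eq_comm, mul_eq_zero, neg_eq_zero, ofReal_eq_zero] at hK
    exact hK.elim I_ne_zero hs
  have hidx : (⟨m - 1, by omega⟩ : Fin (M - 1)).val + 1 = m := Nat.sub_add_cancel hm1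
  rw [partialG_eq_re_div _ _ (HbarV_ThbarV_eq_KbarV_ThbarV n hModd hl) hK0,
    hidx, sq_mul_re_div_of_mul_eq_neg_I_mul hK hs, Complex.sub_im]

theorem grad_Gbar_at_thbar (M n : ℕ) (hM : 3 ≤ M) (hModd : Odd M)
    (hn : n = 1 ∨ n = 2) :
    ∀ l m : ℕ, ∀ (_hl1 : 1 ≤ l) (_hl2 : l ≤ M - 1) (hm1 : 1 ≤ m) (hm2 : m ≤ M - 1),
      (l = m →
        Real.sin (thbarZ M n 1) ^ 2 * partialG M l (ThbarV M n) ⟨m - 1, by omega⟩ =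
          (-1 : ℝ) ^ m * Real.cos (2 * thbarZ M n m) * Real.sin (2 * thbarZ M n 1)) ∧
      (l < m →
        Real.sin (thbarZ M n 1) ^ 2 * partialG M l (ThbarV M n) ⟨m - 1, by omega⟩ =
          (-1 : ℝ) ^ m * Real.sin (2 * thbarZ M n 1) *
            (Real.cos (2 * thbarZ M n m) -
              (-1 : ℝ) ^ l * Real.cos (2 * thbarZ M n ((l : ℤ) - (m : ℤ))))) ∧
      (m < l →
        Real.sin (thbarZ M n 1) ^ 2 * partialG M l (ThbarV M n) ⟨m - 1, by omega⟩ =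
          (-1 : ℝ) ^ m * Real.sin (2 * thbarZ M n 1) *
            (Real.cos (2 * thbarZ M n m) +
              (-1 : ℝ) ^ l * Real.cos (2 * thbarZ M n ((l : ℤ) - (m : ℤ))))) := by
  intro l m _ hl2 hm1 hm2
  have key := sin_sq_mul_partialG_ThbarV hModd (by omega : 0 < n) (by omega : n < M) hl2 hm1 hm2
  rw [im_KbarVDeriv_ThbarV n hModd hm2] at key
  rw [Real.sin_two_mul]
  refine ⟨fun hlm => ?_, fun hlm => ?_, fun hlm => ?_⟩
  · subst hlm
    rw [key, HbarVDeriv_self hModd, mul_assoc, ← ofReal_ofNat, im_ofReal_mul, I_mul_im,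
      HbarV_ThbarV_eq_KbarV_ThbarV n hModd hl2, re_KbarV_ThbarV n hModd]
    ring
  · rw [key, im_HbarVDeriv_ThbarV_of_ne n hModd hl2 hm2 hlm.ne, if_neg hlm.not_gt]
    ring
  · rw [key, im_HbarVDeriv_ThbarV_of_ne n hModd hl2 hm2 hlm.ne', if_pos hlm]
    ring

end
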